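/- Let F be an arbitrary field and V an n-dimensional vector space over F. Let U_1, …, U_m be r-dimensional linear subspaces of V and V_1, …, V_m be s-dimensional linear subspaces of V such that U_i ∩ V_i = {0} for each 1 ≤ i ≤ m and U_i ∩ V_j ≠ {0} whenever 1 ≤ i < j ≤ m. Then m ≤ C(r + s, r), where C(a, b) denotes the binomial coefficient. -/

import Mathlib

/-!
Lovász's exterior-algebra argument. In coordinates, multiply the basis vectors of every `Uᵢ` and
`Wⱼ` by the `n × (r + s)` matrix of indeterminates: this is a projection onto an
`(r + s)`-dimensional space in general position, defined over the polynomial ring, and the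
`r + s` projected vectors of `Uᵢ` and `Wⱼ` have nonzero determinant exactly when
`Uᵢ ∩ Wⱼ = 0`, because a dependence among the rows of a matrix `M` survives multiplication and
independence yields a right inverse of `M` at which the determinant evaluates to `1`.
If `xᵢ` are the projected vectors of `Uᵢ` and `ωⱼ = y_{j,1} ∧ ⋯ ∧ y_{j,s}` is the wedge of those
of `Wⱼ`, the functionals `ω ↦ det (xᵢ, ω)` on `⋀^s` pair triangularly with the `ωⱼ`: zero for
`i < j` and nonzero for `i = j`. So the `ωⱼ` are linearly independent and
`m ≤ dim ⋀^s = C(r + s, s)`.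
-/

open Matrix Module exteriorPower

theorem linearIndependent_of_triangular_pairing {R M ι : Type*} [CommRing R] [IsDomain R]
    [AddCommGroup M] [Module R M] [Fintype ι] [LinearOrder ι] (v : ι → M) (f : ι → M →ₗ[R] R)
    (h_lt : ∀ i j, i < j → f i (v j) = 0) (h_diag : ∀ i, f i (v i) ≠ 0) :
    LinearIndependent R v := by
  classical
  let A : Matrix ι ι R := of fun j i => f i (v j)
  have hA : A.IsUpperTriangular := fun j i hij => h_lt i j hij
  have hdet : A.det ≠ 0 := by
    rw [det_of_isUpperTriangular hA]
    exact Finset.prod_ne_zero_iff.2 fun i _ => h_diag i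
  exact LinearIndependent.of_comp (LinearMap.pi f) (linearIndependent_rows_of_det_ne_zero hdet)

namespace Matrix

variable {R α β : Type*} [CommRing R] [Fintype α] [Fintype β] [DecidableEq α] [DecidableEq β]

noncomputable def detFromRows (X : Matrix α (α ⊕ β) R) : (α ⊕ β → R) [⋀^β]→ₗ[R] R where
  toMultilinearMap :=
    (detRowAlternating : (α ⊕ β → R) [⋀^(α ⊕ β)]→ₗ[R] R).toMultilinearMap.currySum X
  map_eq_zero_of_eq' Y i j hY hij :=
    detRowAlternating.map_eq_zero_of_eq (Sum.elim X Y) (i := Sum.inr i) (j := Sum.inr j) hY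
      (Sum.inr_injective.ne hij)

theorem detFromRows_apply (X : Matrix α (α ⊕ β) R) (Y : Matrix β (α ⊕ β) R) :
    detFromRows X Y = (fromRows X Y).det := rfl

end Matrix

theorem card_le_choose_of_det_fromRows_triangular {R α ι : Type*} [CommRing R] [IsDomain R]
    [Fintype α] [DecidableEq α] [Fintype ι] [LinearOrder ι] {s : ℕ}
    (X : ι → Matrix α (α ⊕ Fin s) R) (Y : ι → Matrix (Fin s) (α ⊕ Fin s) R)
    (h_lt : ∀ i j, i < j → (fromRows (X i) (Y j)).det = 0)
    (h_diag : ∀ i, (fromRows (X i) (Y i)).det ≠ 0) :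
    Fintype.card ι ≤ (Fintype.card α + s).choose s := by
  have hpair : ∀ i j, alternatingMapLinearEquiv (detFromRows (X i)) (ιMulti R s (Y j)) =
      (fromRows (X i) (Y j)).det := fun i j =>
    (alternatingMapLinearEquiv_apply_ιMulti _ _).trans (detFromRows_apply _ _)
  have hli : LinearIndependent R fun j => ιMulti R s (Y j) :=
    linearIndependent_of_triangular_pairing _
      (fun i => alternatingMapLinearEquiv (detFromRows (X i)))
      (by simpa only [hpair] using h_lt) (by simpa only [hpair] using h_diag)
  calc Fintype.card ι ≤ finrank R (⋀[R]^s (α ⊕ Fin s → R)) := hli.fintype_card_le_finrank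
    _ = (Fintype.card α + s).choose s := by
      rw [exteriorPower.finrank_eq, finrank_fintype_fun_eq_card, Fintype.card_sum, Fintype.card_fin]

theorem Matrix.exists_mul_eq_one_of_linearIndependent_row {K m n : Type*} [Field K] [Fintype m]
    [DecidableEq m] [Fintype n] {M : Matrix m n K} (hM : LinearIndependent K M.row) :
    ∃ N : Matrix n m K, M * N = 1 := by
  refine mulVec_surjective_iff_exists_right_inverse.1 ?_
  rw [← coe_mulVecLin, ← LinearMap.range_eq_top]
  apply Submodule.eq_top_of_finrank_eq
  rw [finrank_fintype_fun_eq_card, ← hM.rank_matrix]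
  rfl

theorem Matrix.det_map_C_mul_mvPolynomialX_ne_zero_iff {F ι κ : Type*} [Field F] [Fintype ι]
    [Fintype κ] [DecidableEq κ] (M : Matrix κ ι F) :
    (M.map (MvPolynomial.C (σ := ι × κ)) * mvPolynomialX ι κ F).det ≠ 0 ↔
      LinearIndependent F M.row := by
  let C : F →+* MvPolynomial (ι × κ) F := MvPolynomial.C
  constructor
  · intro hdet
    by_contra hdep
    obtain ⟨g, hg, i, hi⟩ := Fintype.not_linearIndependent_iff.1 hdep
    have hgM : g ᵥ* M = 0 := by rw [vecMul_eq_sum]; exact hg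
    have hne : C ∘ g ≠ 0 :=
      fun h => hi (MvPolynomial.C_injective (ι × κ) F (by simpa using congrFun h i))
    have hv : (C ∘ g) ᵥ* (M.map C * mvPolynomialX ι κ F) = 0 := by
      rw [← vecMul_vecMul, ← funext (RingHom.map_vecMul C M g), hgM]
      simp [← Pi.zero_def]
    exact hdet (exists_vecMul_eq_zero_iff.1 ⟨_, hne, hv⟩)
  · intro hM hdet
    obtain ⟨N, hN⟩ := exists_mul_eq_one_of_linearIndependent_row hM
    let evalN := MvPolynomial.eval fun p : ι × κ => N p.1 p.2
    have h_eval : (M.map C * mvPolynomialX ι κ F).map evalN = 1 := by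
      rw [← hN]
      ext a b
      simp [C, evalN, mul_apply]
    have := congrArg evalN hdet
    rw [RingHom.map_det, RingHom.mapMatrix_apply, h_eval] at this
    simp at this

theorem linearIndependent_sumElim_basis_iff_inf_eq_bot {R V ι κ : Type*} [Ring R]
    [AddCommGroup V] [Module R V] {U W : Submodule R V} (bU : Basis ι R U) (bW : Basis κ R W) :
    LinearIndependent R (Sum.elim (U.subtype ∘ bU) (W.subtype ∘ bW)) ↔ U ⊓ W = ⊥ := by
  simp only [linearIndependent_sum, Sum.elim_comp_inl, Sum.elim_comp_inr, Set.range_comp,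
    ← Submodule.map_span, Basis.span_eq, Submodule.map_top, Submodule.range_subtype, disjoint_iff,
    bU.linearIndependent.map' _ U.ker_subtype, bW.linearIndependent.map' _ W.ker_subtype, true_and]

theorem exists_det_fromRows_ne_zero_iff_inf_eq_bot {F V ι κ : Type*} [Field F] [AddCommGroup V]
    [Module F V] [FiniteDimensional F V] {r s : ℕ} (U : ι → Submodule F V)
    (W : κ → Submodule F V) (hU : ∀ i, finrank F (U i) = r) (hW : ∀ j, finrank F (W j) = s) :
    ∃ (X : ι → Matrix (Fin r) (Fin r ⊕ Fin s)
        (MvPolynomial (Fin (finrank F V) × (Fin r ⊕ Fin s)) F))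
      (Y : κ → Matrix (Fin s) (Fin r ⊕ Fin s)
        (MvPolynomial (Fin (finrank F V) × (Fin r ⊕ Fin s)) F)),
      ∀ i j, (fromRows (X i) (Y j)).det ≠ 0 ↔ U i ⊓ W j = ⊥ := by
  let e := (Module.finBasis F V).equivFun
  let bU i := Module.finBasisOfFinrankEq F (U i) (hU i)
  let bW j := Module.finBasisOfFinrankEq F (W j) (hW j)
  let P i : Matrix (Fin r) (Fin (finrank F V)) F := of (e ∘ (U i).subtype ∘ bU i)
  let Q j : Matrix (Fin s) (Fin (finrank F V)) F := of (e ∘ (W j).subtype ∘ bW j)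
  let C : F →+* MvPolynomial (Fin (finrank F V) × (Fin r ⊕ Fin s)) F := MvPolynomial.C
  let G := mvPolynomialX (Fin (finrank F V)) (Fin r ⊕ Fin s) F
  refine ⟨fun i => (P i).map C * G, fun j => (Q j).map C * G, fun i j => ?_⟩
  beta_reduce
  rw [← fromRows_mul, ← fromRows_map, det_map_C_mul_mvPolynomialX_ne_zero_iff,
    ← linearIndependent_sumElim_basis_iff_inf_eq_bot (bU i) (bW j),
    ← LinearMap.linearIndependent_iff e.toLinearMap e.ker, Sum.comp_elim]
  rfl

theorem bollobas_subspaces_general {F V : Type*} [Field F] [AddCommGroup V] [Module F V]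
    (m r s : ℕ) [FiniteDimensional F V]
    (U W : Fin m → Submodule F V)
    (hU : ∀ i, Module.finrank F (U i) = r)
    (hW : ∀ i, Module.finrank F (W i) = s)
    (hdisj : ∀ i, U i ⊓ W i = ⊥)
    (hcross : ∀ i j, i < j → U i ⊓ W j ≠ ⊥) :
    m ≤ (r + s).choose r := by
  obtain ⟨X, Y, hXY⟩ := exists_det_fromRows_ne_zero_iff_inf_eq_bot U W hU hW
  have := card_le_choose_of_det_fromRows_triangular X Y
    (fun i j hij => not_not.1 fun h => hcross i j hij ((hXY i j).1 h))
    (fun i => (hXY i i).2 (hdisj i))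
  rw [Nat.choose_symm_add]
  simpa using this

/-- Lovász' subspace version of Bollobás' theorem (Theorem 1.3): if `Uᵢ` are `r`-dimensional
and `Vᵢ` are `s`-dimensional subspaces of an `n`-dimensional vector space over an arbitrary
field with `Uᵢ ∩ Vᵢ = {0}` and `Uᵢ ∩ Vⱼ ≠ {0}` for `i < j`, then `m ≤ C(r + s, r)`. -/
theorem bollobas_subspaces {F V : Type*} [Field F] [AddCommGroup V] [Module F V]
    (n m r s : ℕ) (hdim : Module.finrank F V = n) [FiniteDimensional F V]
    (U W : Fin m → Submodule F V)
    (hU : ∀ i, Module.finrank F (U i) = r)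
    (hW : ∀ i, Module.finrank F (W i) = s)
    (hdisj : ∀ i, U i ⊓ W i = ⊥)
    (hcross : ∀ i j, i < j → U i ⊓ W j ≠ ⊥) :
    m ≤ (r + s).choose r :=
  bollobas_subspaces_general m r s U W hU hW hdisj hcross
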